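/- Let 0 < λ ≤ 1, a < b, and g : [a,b] → ℂ differentiable with integrable derivative. Then |∫_a^b e^{−ist} (t−a)^{λ−1} g(t) dt| ≤ C_λ (|g(b)| + ∫_a^b |g′(t)| dt) |s|^{−λ} for all s ≠ 0, where C_λ depends only on λ. -/

import Mathlib

open MeasureTheory Set intervalIntegral

/-! Integrating by parts against the primitive `F u = ∫_a^u K` of the kernel
`K t = e^{-ist} (t-a)^{λ-1}` bounds the integral by `sup ‖F‖ · (‖g b‖ + ∫ ‖g'‖)`, so it suffices
to bound `F` by `C_λ |s|^{-λ}`. After translating to `a = 0`, split at `ε = |s|⁻¹`: on `[0, ε]`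
the trivial bound gives `ε^λ / λ`, and on `[ε, L]` the same integration by parts, now of the
decreasing `u^{λ-1}` against `e^{-isu}` whose primitives are bounded by `2 / |s|`, gives
`2 |s|⁻¹ ε^{λ-1} = 2 |s|^{-λ}`. -/

theorem norm_integral_mul_le_of_norm_primitive_le {A : Type*} [NormedRing A] [NormedAlgebra ℝ A]
    [CompleteSpace A] {K g g' : ℝ → A} {a b M : ℝ} (hab : a ≤ b)
    (hK : IntervalIntegrable K volume a b) (hKc : ContinuousOn K (Ioo a b))
    (hg : ∀ t ∈ Icc a b, HasDerivWithinAt g (g' t) (Icc a b) t)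
    (hg' : IntervalIntegrable g' volume a b) (hM : ∀ u ∈ Icc a b, ‖∫ t in a..u, K t‖ ≤ M) :
    ‖∫ t in a..b, K t * g t‖ ≤ M * (‖g b‖ + ∫ t in a..b, ‖g' t‖) := by
  set F : ℝ → A := fun u ↦ ∫ t in a..u, K t
  have hF : ContinuousOn F (Icc a b) := by
    simpa [uIcc_of_le hab] using continuousOn_primitive_interval' hK left_mem_uIcc
  have hgc : ContinuousOn g (Icc a b) := fun t ht ↦ (hg t ht).continuousWithinAt
  have hFK : ∀ x ∈ Ioo a b, HasDerivAt F (K x) x := fun x hx ↦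
    integral_hasDerivAt_right (hK.mono_set (by simp [uIcc_of_le hab, uIcc_of_le hx.1.le,
      Icc_subset_Icc_right hx.2.le]))
      (hKc.stronglyMeasurableAtFilter isOpen_Ioo x hx) (hKc.continuousAt (isOpen_Ioo.mem_nhds hx))
  have hgg' : ∀ x ∈ Ioo a b, HasDerivAt g (g' x) x := fun x hx ↦
    (hg x (Ioo_subset_Icc_self hx)).hasDerivAt (Icc_mem_nhds hx.1 hx.2)
  have hFg' : IntervalIntegrable (fun t ↦ F t * g' t) volume a b :=
    hg'.continuousOn_mul (by rwa [uIcc_of_le hab])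
  have hparts : ∫ t in a..b, K t * g t = F b * g b - ∫ t in a..b, F t * g' t := by
    have := integral_deriv_mul_eq_sub_of_hasDerivAt (u := F) (v := g)
      (by rwa [uIcc_of_le hab]) (by rwa [uIcc_of_le hab])
      (by simpa [hab] using hFK) (by simpa [hab] using hgg') hK hg'
    rw [integral_add (hK.mul_continuousOn (by rwa [uIcc_of_le hab])) hFg'] at this
    simp only [F, integral_same, zero_mul, sub_zero] at this
    exact eq_sub_of_add_eq this
  have hrest : ‖∫ t in a..b, F t * g' t‖ ≤ M * ∫ t in a..b, ‖g' t‖ := by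
    rw [← intervalIntegral.integral_const_mul]
    refine norm_integral_le_of_norm_le hab (ae_of_all _ fun t ht ↦ ?_) (hg'.norm.const_mul M)
    exact (norm_mul_le _ _).trans
      (mul_le_mul_of_nonneg_right (hM t (Ioc_subset_Icc_self ht)) (norm_nonneg _))
  calc ‖∫ t in a..b, K t * g t‖ ≤ ‖F b‖ * ‖g b‖ + ‖∫ t in a..b, F t * g' t‖ := by
        rw [hparts]; exact (norm_sub_le _ _).trans (add_le_add_left (norm_mul_le _ _) _)
    _ ≤ M * ‖g b‖ + M * ∫ t in a..b, ‖g' t‖ :=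
        add_le_add (mul_le_mul_of_nonneg_right (hM b (right_mem_Icc.2 hab)) (norm_nonneg _)) hrest
    _ = M * (‖g b‖ + ∫ t in a..b, ‖g' t‖) := by ring

theorem norm_exp_neg_I_mul (s t : ℝ) : ‖Complex.exp (-(Complex.I * s * t))‖ = 1 := by
  rw [Complex.norm_exp]; simp

theorem norm_integral_exp_neg_I_mul_le {s : ℝ} (hs : s ≠ 0) (u v : ℝ) :
    ‖∫ t in u..v, Complex.exp (-(Complex.I * s * t))‖ ≤ 2 / |s| := by
  have hc : -(Complex.I * s) ≠ 0 := by simp [hs]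
  simp_rw [← neg_mul (Complex.I * (s : ℂ))]
  rw [integral_exp_mul_complex hc, norm_div, norm_neg, norm_mul, Complex.norm_I, one_mul,
    Complex.norm_real, Real.norm_eq_abs, neg_mul, neg_mul]
  gcongr
  exact (norm_sub_le _ _).trans (by rw [norm_exp_neg_I_mul, norm_exp_neg_I_mul]; norm_num)

theorem norm_integral_exp_mul_rpow_le {lam : ℝ} (h0 : 0 < lam) (s : ℝ) {L : ℝ} (hL : 0 ≤ L) :
    ‖∫ u in (0 : ℝ)..L, Complex.exp (-(Complex.I * s * u)) * ((u ^ (lam - 1) : ℝ) : ℂ)‖ ≤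
      L ^ lam / lam := by
  calc _ ≤ ∫ u in (0 : ℝ)..L, u ^ (lam - 1) := by
        refine norm_integral_le_of_norm_le hL (ae_of_all _ fun u hu ↦ le_of_eq ?_)
          (intervalIntegral.intervalIntegrable_rpow' (by linarith))
        rw [norm_mul, norm_exp_neg_I_mul, one_mul, Complex.norm_real, Real.norm_eq_abs,
          abs_of_nonneg (Real.rpow_nonneg hu.1.le _)]
    _ = L ^ lam / lam := by
        rw [integral_rpow (Or.inl (by linarith)), sub_add_cancel, Real.zero_rpow h0.ne', sub_zero]

theorem norm_integral_exp_mul_rpow_tail_le {lam : ℝ} (h1 : lam ≤ 1) {s : ℝ} (hs : s ≠ 0)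
    {ε L : ℝ} (hε : 0 < ε) (hεL : ε ≤ L) :
    ‖∫ u in ε..L, Complex.exp (-(Complex.I * s * u)) * ((u ^ (lam - 1) : ℝ) : ℂ)‖ ≤
      2 / |s| * ε ^ (lam - 1) := by
  have hpos : ∀ u ∈ uIcc ε L, 0 < u := fun u hu ↦
    hε.trans_le (by rw [uIcc_of_le hεL] at hu; exact hu.1)
  have hrpow : ∀ u ∈ uIcc ε L,
      HasDerivAt (fun u : ℝ ↦ u ^ (lam - 1)) ((lam - 1) * u ^ (lam - 1 - 1)) u :=
    fun u hu ↦ Real.hasDerivAt_rpow_const (Or.inl (hpos u hu).ne')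
  have hrpow' : ContinuousOn (fun u : ℝ ↦ (lam - 1) * u ^ (lam - 1 - 1)) (uIcc ε L) :=
    continuousOn_const.mul (continuousOn_id.rpow_const fun u hu ↦ Or.inl (hpos u hu).ne')
  -- `u ↦ u ^ (lam - 1)` is antitone, so its total variation is the drop of its values
  have hvar : ∫ u in ε..L, ‖(((lam - 1) * u ^ (lam - 1 - 1) : ℝ) : ℂ)‖ =
      ε ^ (lam - 1) - L ^ (lam - 1) := by
    calc _ = ∫ u in ε..L, -((lam - 1) * u ^ (lam - 1 - 1)) := by
          refine integral_congr fun u hu ↦ ?_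
          rw [Complex.norm_real, Real.norm_eq_abs, abs_of_nonpos]
          exact mul_nonpos_of_nonpos_of_nonneg (by linarith) (Real.rpow_nonneg (hpos u hu).le _)
      _ = _ := by
          rw [intervalIntegral.integral_neg,
            integral_eq_sub_of_hasDerivAt hrpow hrpow'.intervalIntegrable, neg_sub]
  have hK : Continuous fun u : ℝ ↦ Complex.exp (-(Complex.I * s * u)) := by fun_prop
  have := norm_integral_mul_le_of_norm_primitive_le hεL (hK.intervalIntegrable _ _)
    hK.continuousOn
    (fun u hu ↦ (hrpow u (by rwa [uIcc_of_le hεL])).ofReal_comp.hasDerivWithinAt)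
    (Complex.continuous_ofReal.comp_continuousOn hrpow').intervalIntegrable
    (fun u _ ↦ norm_integral_exp_neg_I_mul_le hs ε u)
  rwa [hvar, Complex.norm_real, Real.norm_eq_abs,
    abs_of_nonneg (Real.rpow_nonneg (hε.le.trans hεL) _), add_sub_cancel] at this

theorem intervalIntegrable_exp_mul_rpow_sub {lam : ℝ} (h0 : 0 < lam) (s a u v : ℝ) :
    IntervalIntegrable
      (fun t : ℝ ↦ Complex.exp (-(Complex.I * s * t)) * (((t - a) ^ (lam - 1) : ℝ) : ℂ))
      volume u v := by
  have h := (intervalIntegrable_rpow' (r := lam - 1) (a := u - a) (b := v - a)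
    (by linarith)).comp_sub_right a
  simp only [sub_add_cancel] at h
  exact IntervalIntegrable.continuousOn_mul ⟨h.1.ofReal, h.2.ofReal⟩ (by fun_prop)

theorem norm_integral_exp_mul_rpow_le_rpow_neg {lam : ℝ} (h0 : 0 < lam) (h1 : lam ≤ 1) {s : ℝ}
    (hs : s ≠ 0) {L : ℝ} (hL : 0 ≤ L) :
    ‖∫ u in (0 : ℝ)..L, Complex.exp (-(Complex.I * s * u)) * ((u ^ (lam - 1) : ℝ) : ℂ)‖ ≤
      (1 / lam + 2) * |s| ^ (-lam) := by
  have hs' : 0 < |s| := abs_pos.2 hs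
  set ε := |s|⁻¹
  have hε : 0 < ε := inv_pos.2 hs'
  have hεlam : ε ^ lam = |s| ^ (-lam) := by rw [Real.inv_rpow hs'.le, Real.rpow_neg hs'.le]
  have hεlam' : 2 / |s| * ε ^ (lam - 1) = 2 * |s| ^ (-lam) := by
    rw [Real.inv_rpow hs'.le, ← Real.rpow_neg hs'.le, div_eq_mul_inv, mul_assoc,
      ← Real.rpow_neg_one, ← Real.rpow_add hs']
    ring_nf
  rcases le_total L ε with hLε | hεL
  · calc _ ≤ L ^ lam / lam := norm_integral_exp_mul_rpow_le h0 s hL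
      _ ≤ ε ^ lam / lam := by gcongr
      _ = 1 / lam * |s| ^ (-lam) := by rw [hεlam]; ring
      _ ≤ (1 / lam + 2) * |s| ^ (-lam) := by gcongr; linarith
  · have hint (u v : ℝ) : IntervalIntegrable
        (fun u : ℝ ↦ Complex.exp (-(Complex.I * s * u)) * ((u ^ (lam - 1) : ℝ) : ℂ))
        volume u v := by
      simpa using intervalIntegrable_exp_mul_rpow_sub h0 s 0 u v
    rw [← integral_add_adjacent_intervals (hint 0 ε) (hint ε L)]
    calc _ ≤ ε ^ lam / lam + 2 / |s| * ε ^ (lam - 1) :=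
          (norm_add_le _ _).trans (add_le_add (norm_integral_exp_mul_rpow_le h0 s hε.le)
            (norm_integral_exp_mul_rpow_tail_le h1 hs hε hεL))
      _ = (1 / lam + 2) * |s| ^ (-lam) := by rw [hεlam, hεlam']; ring

theorem norm_integral_exp_mul_rpow_sub_le {lam : ℝ} (h0 : 0 < lam) (h1 : lam ≤ 1) {s : ℝ}
    (hs : s ≠ 0) {a u : ℝ} (hau : a ≤ u) :
    ‖∫ t in a..u, Complex.exp (-(Complex.I * s * t)) * (((t - a) ^ (lam - 1) : ℝ) : ℂ)‖ ≤
      (1 / lam + 2) * |s| ^ (-lam) := by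
  have hshift : ∫ t in a..u, Complex.exp (-(Complex.I * s * t)) * (((t - a) ^ (lam - 1) : ℝ) : ℂ)
      = Complex.exp (-(Complex.I * s * a)) *
        ∫ x in (0 : ℝ)..u - a, Complex.exp (-(Complex.I * s * x)) * ((x ^ (lam - 1) : ℝ) : ℂ) := by
    rw [← intervalIntegral.integral_const_mul, ← sub_self a,
      ← integral_comp_sub_right (fun x : ℝ ↦ Complex.exp (-(Complex.I * s * a)) *
        (Complex.exp (-(Complex.I * s * x)) * ((x ^ (lam - 1) : ℝ) : ℂ)))]
    refine integral_congr fun t _ ↦ ?_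
    simp only [← mul_assoc, ← Complex.exp_add, Complex.ofReal_sub]
    ring_nf
  rw [hshift, norm_mul, norm_exp_neg_I_mul, one_mul]
  exact norm_integral_exp_mul_rpow_le_rpow_neg h0 h1 hs (sub_nonneg.2 hau)

theorem stmt11 (lam : ℝ) (h0 : 0 < lam) (h1 : lam ≤ 1) :
    ∃ C > 0, ∀ (a b : ℝ), a < b → ∀ (g g' : ℝ → ℂ),
      (∀ t ∈ Set.Icc a b, HasDerivWithinAt g (g' t) (Set.Icc a b) t) →
      IntervalIntegrable g' volume a b →
      ∀ s : ℝ, s ≠ 0 →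
        ‖∫ t in a..b,
            Complex.exp (-(Complex.I * s * t)) * (((t - a) ^ (lam - 1) : ℝ) : ℂ) * g t‖ ≤
          C * (‖g b‖ + ∫ t in a..b, ‖g' t‖) * |s| ^ (-lam) := by
  refine ⟨1 / lam + 2, by positivity, fun a b hab g g' hg hg' s hs ↦ ?_⟩
  have hK : ContinuousOn
      (fun t : ℝ ↦ Complex.exp (-(Complex.I * s * t)) * (((t - a) ^ (lam - 1) : ℝ) : ℂ))
      (Ioo a b) := fun t ht ↦ by
    have hta : t - a ≠ 0 := sub_ne_zero.2 ht.1.ne'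
    exact ContinuousAt.continuousWithinAt (by fun_prop (disch := exact Or.inl hta))
  calc _ ≤ (1 / lam + 2) * |s| ^ (-lam) * (‖g b‖ + ∫ t in a..b, ‖g' t‖) :=
        norm_integral_mul_le_of_norm_primitive_le hab.le
          (intervalIntegrable_exp_mul_rpow_sub h0 s a a b) hK hg hg'
          fun u hu ↦ norm_integral_exp_mul_rpow_sub_le h0 h1 hs hu.1
    _ = _ := by ring
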